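/- arXiv:1403.2511 — 2 statements merged into one kernel-verified Lean document; each statement's English description precedes it below -/
import Mathlib

section
/- The function Z₁(t) = 2 + t·w'(t), where w'(t) = √2 (1 - e^{√2 t})/(1 + e^{√2 t}), satisfies the linearized equation Z₁'' + e^{w} Z₁ = 0 on ℝ. -/
noncomputable def Z₁ (t : ℝ) : ℝ :=
  2 + t * (Real.sqrt 2 * (1 - Real.exp (Real.sqrt 2 * t)) / (1 + Real.exp (Real.sqrt 2 * t)))

/-!
`w` solves Liouville's equation `w'' + e^w = 0`, so `Z₁ = 2 + t w'` — the derivative at `λ = 1`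
of the scaling family `w(λ t) + 2 log λ` of solutions — solves its linearization. Concretely,
with `v = w'` and `f = e^w` one has `v' = -f` and `f' = f v`, and these two relations alone give
`(2 + t v)'' = (v - t f)' = -2 f - t f v = -f (2 + t v)`.
-/

open Real

section Liouville

variable {v f : ℝ → ℝ} (hv : ∀ t, HasDerivAt v (-f t) t)
  (hf : ∀ t, HasDerivAt f (f t * v t) t)
include hv

theorem hasDerivAt_two_add_mul_of_liouville (t : ℝ) :
    HasDerivAt (fun t => 2 + t * v t) (v t - t * f t) t :=
  (((hasDerivAt_id' t).mul (hv t)).const_add 2).congr_deriv (by ring)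

include hf in
theorem two_add_mul_solves_linearized_liouville :
    Differentiable ℝ (fun t => 2 + t * v t) ∧
      Differentiable ℝ (deriv fun t => 2 + t * v t) ∧
      ∀ t, deriv (deriv fun t => 2 + t * v t) t + f t * (2 + t * v t) = 0 := by
  have hZ' : ∀ t, HasDerivAt (fun t => v t - t * f t) (-(f t * (2 + t * v t))) t := fun t =>
    ((hv t).sub ((hasDerivAt_id' t).mul (hf t))).congr_deriv (by ring)
  have hderiv : deriv (fun t => 2 + t * v t) = fun t => v t - t * f t :=
    funext fun t => (hasDerivAt_two_add_mul_of_liouville hv t).deriv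
  refine ⟨fun t => (hasDerivAt_two_add_mul_of_liouville hv t).differentiableAt, ?_, fun t => ?_⟩
  · rw [hderiv]
    exact fun t => (hZ' t).differentiableAt
  · rw [hderiv, (hZ' t).deriv]
    ring

end Liouville

-- `w'` and `e^w` for `w(t) = log (4 e^{√2 t} / (1 + e^{√2 t})²)`.
noncomputable def profileSlope (t : ℝ) : ℝ :=
  √2 * (1 - exp (√2 * t)) / (1 + exp (√2 * t))

noncomputable def profileDensity (t : ℝ) : ℝ :=
  4 * exp (√2 * t) / (1 + exp (√2 * t)) ^ 2

theorem hasDerivAt_exp_sqrt_two_mul (t : ℝ) :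
    HasDerivAt (fun t => exp (√2 * t)) (√2 * exp (√2 * t)) t := by
  simpa [mul_comm] using ((hasDerivAt_id t).const_mul √2).exp

theorem one_add_exp_ne_zero (x : ℝ) : 1 + exp x ≠ 0 := by positivity

theorem hasDerivAt_profileSlope (t : ℝ) : HasDerivAt profileSlope (-profileDensity t) t := by
  have hE := hasDerivAt_exp_sqrt_two_mul t
  refine (((hE.const_sub 1).const_mul √2).div (hE.const_add 1)
    (one_add_exp_ne_zero _)).congr_deriv ?_
  have := one_add_exp_ne_zero (√2 * t)
  unfold profileDensity
  field_simp
  ring_nf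
  rw [sq_sqrt zero_le_two]
  ring

theorem hasDerivAt_profileDensity (t : ℝ) :
    HasDerivAt profileDensity (profileDensity t * profileSlope t) t := by
  have hE := hasDerivAt_exp_sqrt_two_mul t
  refine ((hE.const_mul 4).div ((hE.const_add 1).fun_pow 2)
    (pow_ne_zero 2 (one_add_exp_ne_zero _))).congr_deriv ?_
  have := one_add_exp_ne_zero (√2 * t)
  unfold profileDensity profileSlope
  field_simp
  ring

theorem stmt_5 :
    Differentiable ℝ Z₁ ∧ Differentiable ℝ (deriv Z₁) ∧
      ∀ t : ℝ, deriv (deriv Z₁) t +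
        (4 * Real.exp (Real.sqrt 2 * t) / (1 + Real.exp (Real.sqrt 2 * t)) ^ 2) * Z₁ t = 0 :=
  two_add_mul_solves_linearized_liouville hasDerivAt_profileSlope hasDerivAt_profileDensity
end

section
/- Simplified gap condition: for Λ > 0, there exist c > 0 and a sequence ε_k → 0⁺ such that |4π² m² ε_k² - Λ| ≥ c ε_k for every natural number m and every k. -/
/-!
Take `ε_k = √Λ / (2π N_k)` with `N_k = k + 1/2`. Then `4π²m²ε_k² - Λ = (Λ / N_k²)(m² - N_k²)`,
and since every natural number is at distance at least `1/2` from the half-integer `N_k`,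
`|m² - N_k²| = |m - N_k| (m + N_k) ≥ N_k / 2`. Hence the left side is at least
`Λ / (2 N_k) = π √Λ ε_k`.
-/

open Filter Topology

lemma half_le_abs_natCast_sub_add_half (m k : ℕ) : 1 / 2 ≤ |(m : ℝ) - (k + 1 / 2)| := by
  rcases le_or_gt m k with h | h
  · have : (m : ℝ) ≤ k := by exact_mod_cast h
    rw [abs_of_neg (by linarith)]
    linarith
  · have : (k : ℝ) + 1 ≤ m := by exact_mod_cast h
    rw [abs_of_pos (by linarith)]
    linarith

lemma half_le_abs_sq_sub_sq {x N : ℝ} (hx : 0 ≤ x) (hN : 0 ≤ N) (h : 1 / 2 ≤ |x - N|) :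
    N / 2 ≤ |x ^ 2 - N ^ 2| := by
  rw [sq_sub_sq, abs_mul, abs_of_nonneg (by positivity : 0 ≤ x + N)]
  nlinarith

lemma le_abs_mul_sq_sub_of_half_le_abs_sub {ω Λ N x : ℝ} (hω : 0 < ω) (hΛ : 0 < Λ) (hN : 0 < N)
    (hx : 0 ≤ x) (h : 1 / 2 ≤ |x - N|) :
    ω * √Λ / 2 * (√Λ / (ω * N)) ≤ |ω ^ 2 * x ^ 2 * (√Λ / (ω * N)) ^ 2 - Λ| := by
  have hsq : √Λ ^ 2 = Λ := Real.sq_sqrt hΛ.le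
  have rhs : ω ^ 2 * x ^ 2 * (√Λ / (ω * N)) ^ 2 - Λ = Λ / N ^ 2 * (x ^ 2 - N ^ 2) := by
    field_simp
    rw [hsq]
    ring
  have lhs : ω * √Λ / 2 * (√Λ / (ω * N)) = Λ / N ^ 2 * (N / 2) := by
    field_simp
    rw [hsq]
  rw [rhs, lhs, abs_mul, abs_of_pos (by positivity)]
  exact mul_le_mul_of_nonneg_left (half_le_abs_sq_sub_sq hx hN.le h) (by positivity)

theorem stmt_13 (Λ : ℝ) (hΛ : 0 < Λ) :
    ∃ c > (0 : ℝ), ∃ E : ℕ → ℝ,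
      (∀ k, 0 < E k) ∧ Tendsto E atTop (𝓝 0) ∧
      ∀ k, ∀ m : ℕ, c * E k ≤ |4 * Real.pi ^ 2 * (m : ℝ) ^ 2 * (E k) ^ 2 - Λ| := by
  have hω : 0 < 2 * Real.pi := by positivity
  refine ⟨2 * Real.pi * √Λ / 2, by positivity, fun k => √Λ / (2 * Real.pi * (k + 1 / 2)),
    fun k => by positivity, ?_, fun k m => ?_⟩
  · exact tendsto_const_nhds.div_atTop <| Tendsto.const_mul_atTop hω <|
      tendsto_atTop_add_const_right _ _ tendsto_natCast_atTop_atTop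
  · convert le_abs_mul_sq_sub_of_half_le_abs_sub hω hΛ (by positivity) (Nat.cast_nonneg m)
      (half_le_abs_natCast_sub_add_half m k) using 3
    ring
end
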